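/- Let m ≥ 2, let K ∈ ℝ^{m×m} be symmetric positive definite, η ∈ ℝ^m, fix j ∈ {1,…,m−1} and α > 0. For x ∈ Δ_{−m}° write x_m := 1 − Σ_{i=1}^{m−1} x_i, L(x) = (log x_1, …, log x_m), and define the log–log profiled score t_j(x) = −(κ_{·,j}^⊤ L(x))/x_j + (κ_{·,m}^⊤ L(x))/x_m + η_j/x_j − η_m/x_m. Then ∫_{Δ_{−m}°} exp(−(1/2) L(x)^⊤ K L(x) + η^⊤ L(x)) · min{x_j, x_m}^α · t_j(x)² dx < ∞. -/

import Mathlib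

/-!
On the open simplex every coordinate `y i` of `fullVec x` lies in `(0, 1]`. Writing
`u = ‖logVec y‖` (sup norm), this gives `(y i)⁻¹ ≤ exp u` and `min (y j) (y m) ^ α ≤ 1`, so the
score is `O((1 + u) exp u)`, while positive definiteness of `K` bounds the log–log density by
`exp (E u - c u² / 2)`. The Gaussian factor in `u` beats the exponential growth of the squared
score, so the integrand is bounded on the simplex, which has finite volume.
-/

open MeasureTheory Matrix Finset

/-- The open simplex `Δ_{-m}°` in `ℝ^n` (where `m = n+1`). -/
def simplexInt (n : ℕ) : Set (Fin n → ℝ) :=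
  {x | (∀ i, 0 < x i) ∧ ∑ i, x i < 1}

/-- Profile the last coordinate: send `x ∈ ℝ^n` to `(x, 1 - ∑ x) ∈ ℝ^{n+1}`. -/
noncomputable def fullVec {n : ℕ} (x : Fin n → ℝ) : Fin (n + 1) → ℝ :=
  Fin.snoc x (1 - ∑ i, x i)

/-- Componentwise logarithm. -/
noncomputable def logVec {n : ℕ} (x : Fin n → ℝ) : Fin n → ℝ :=
  fun i => Real.log (x i)

theorem Matrix.PosDef.exists_pos_mul_norm_sq_le {ι : Type*} [Fintype ι] {K : Matrix ι ι ℝ}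
    (hK : K.PosDef) : ∃ c > 0, ∀ v : ι → ℝ, c * ‖v‖ ^ 2 ≤ v ⬝ᵥ K *ᵥ v := by
  rcases isEmpty_or_nonempty ι with hι | hι
  · exact ⟨1, one_pos, fun v => by simp [Subsingleton.elim v 0]⟩
  have hcont : Continuous fun v : ι → ℝ => v ⬝ᵥ K *ᵥ v := by
    simp only [dotProduct, mulVec]
    fun_prop
  obtain ⟨v₀, hv₀, hmin⟩ := (isCompact_sphere (0 : ι → ℝ) 1).exists_isMinOn
    (NormedSpace.sphere_nonempty.2 zero_le_one) hcont.continuousOn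
  have hv₀_pos : 0 < v₀ ⬝ᵥ K *ᵥ v₀ := by
    simpa using hK.dotProduct_mulVec_pos (ne_zero_of_mem_unit_sphere ⟨v₀, hv₀⟩)
  refine ⟨v₀ ⬝ᵥ K *ᵥ v₀, hv₀_pos, fun v => ?_⟩
  rcases eq_or_ne v 0 with rfl | hv
  · simp
  have hpos : 0 < ‖v‖ := norm_pos_iff.2 hv
  have hscaled : v₀ ⬝ᵥ K *ᵥ v₀ ≤ ‖v‖⁻¹ * (‖v‖⁻¹ * (v ⬝ᵥ K *ᵥ v)) := by
    have hunit : ‖v‖⁻¹ • v ∈ Metric.sphere 0 1 := by simp [norm_smul, hpos.ne']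
    simpa [mulVec_smul] using hmin hunit
  calc v₀ ⬝ᵥ K *ᵥ v₀ * ‖v‖ ^ 2 ≤ ‖v‖⁻¹ * (‖v‖⁻¹ * (v ⬝ᵥ K *ᵥ v)) * ‖v‖ ^ 2 := by gcongr
    _ = v ⬝ᵥ K *ᵥ v := by field_simp

theorem abs_dotProduct_le_sum_abs_mul_norm {ι : Type*} [Fintype ι] (w v : ι → ℝ) :
    |w ⬝ᵥ v| ≤ (∑ i, |w i|) * ‖v‖ :=
  calc |w ⬝ᵥ v| ≤ ∑ i, |w i * v i| := abs_sum_le_sum_abs _ _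
    _ ≤ ∑ i, |w i| * ‖v‖ := sum_le_sum fun i _ => by
        rw [abs_mul]
        gcongr
        exact norm_le_pi_norm v i
    _ = (∑ i, |w i|) * ‖v‖ := (sum_mul ..).symm

theorem sq_mul_exp_sub_le {a b c d u : ℝ} (hc : 0 < c) (hp : 0 ≤ a + b * u) :
    (a + b * u) ^ 2 * Real.exp (d * u - c / 2 * u ^ 2)
      ≤ 2 * Real.exp (a + (b + d) ^ 2 / (2 * c)) := by
  have hsq : (a + b * u) ^ 2 ≤ 2 * Real.exp (a + b * u) := by
    have := Real.pow_div_factorial_le_exp _ hp 2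
    norm_num [Nat.factorial] at this
    linarith
  have hquad : b * u + (d * u - c / 2 * u ^ 2) ≤ (b + d) ^ 2 / (2 * c) := by
    rw [le_div_iff₀ (by positivity)]
    nlinarith [sq_nonneg (c * u - (b + d))]
  calc (a + b * u) ^ 2 * Real.exp (d * u - c / 2 * u ^ 2)
      ≤ 2 * Real.exp (a + b * u) * Real.exp (d * u - c / 2 * u ^ 2) := by gcongr
    _ = 2 * Real.exp (a + (b * u + (d * u - c / 2 * u ^ 2))) := by
        rw [mul_assoc, ← Real.exp_add, add_assoc]
    _ ≤ 2 * Real.exp (a + (b + d) ^ 2 / (2 * c)) := by gcongr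

section logVec

variable {N : ℕ} {y : Fin N → ℝ}

theorem inv_le_exp_norm_logVec {i : Fin N} (hy : 0 < y i) : (y i)⁻¹ ≤ Real.exp ‖logVec y‖ :=
  calc (y i)⁻¹ = Real.exp (-Real.log (y i)) := by rw [Real.exp_neg, Real.exp_log hy]
    _ ≤ Real.exp ‖logVec y‖ :=
        Real.exp_le_exp.2 ((neg_le_abs _).trans (norm_le_pi_norm (logVec y) i))

theorem abs_div_le_mul_exp_norm_logVec (s : ℝ) {i : Fin N} (hy : 0 < y i) :
    |s / y i| ≤ |s| * Real.exp ‖logVec y‖ := by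
  rw [abs_div, abs_of_pos hy, div_eq_mul_inv]
  exact mul_le_mul_of_nonneg_left (inv_le_exp_norm_logVec hy) (abs_nonneg s)

theorem abs_loglog_score_le (K : Matrix (Fin N) (Fin N) ℝ) (η : Fin N → ℝ) (j m : Fin N)
    (hy : ∀ i, 0 < y i) :
    |-(∑ i, K i j * Real.log (y i)) / y j + (∑ i, K i m * Real.log (y i)) / y m
        + η j / y j - η m / y m|
      ≤ (|η j| + |η m| + ((∑ i, |K i j|) + ∑ i, |K i m|) * ‖logVec y‖)
        * Real.exp ‖logVec y‖ := by
  have hj : |∑ i, K i j * Real.log (y i)| ≤ (∑ i, |K i j|) * ‖logVec y‖ :=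
    abs_dotProduct_le_sum_abs_mul_norm (fun i => K i j) (logVec y)
  have hm : |∑ i, K i m * Real.log (y i)| ≤ (∑ i, |K i m|) * ‖logVec y‖ :=
    abs_dotProduct_le_sum_abs_mul_norm (fun i => K i m) (logVec y)
  have h₁ := abs_div_le_mul_exp_norm_logVec (-(∑ i, K i j * Real.log (y i))) (hy j)
  have h₂ := abs_div_le_mul_exp_norm_logVec (∑ i, K i m * Real.log (y i)) (hy m)
  have h₃ := abs_div_le_mul_exp_norm_logVec (η j) (hy j)
  have h₄ := abs_div_le_mul_exp_norm_logVec (η m) (hy m)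
  have he := (Real.exp_pos ‖logVec y‖).le
  rw [abs_neg] at h₁
  calc _ ≤ |-(∑ i, K i j * Real.log (y i)) / y j| + |(∑ i, K i m * Real.log (y i)) / y m|
        + |η j / y j| + |η m / y m| :=
        (abs_sub _ _).trans (add_le_add_left ((abs_add_le _ _).trans
          (add_le_add_left (abs_add_le _ _) _)) _)
    _ ≤ _ := by linarith [mul_le_mul_of_nonneg_right hj he, mul_le_mul_of_nonneg_right hm he]

end logVec

theorem exists_abs_loglog_integrand_le {N : ℕ} (K : Matrix (Fin N) (Fin N) ℝ) (hK : K.PosDef)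
    (η : Fin N → ℝ) (j m : Fin N) {α : ℝ} (hα : 0 ≤ α) :
    ∃ C, ∀ y : Fin N → ℝ, (∀ i, 0 < y i) → (∀ i, y i ≤ 1) →
      |Real.exp (-(1 / 2) * (logVec y ⬝ᵥ K.mulVec (logVec y)) + η ⬝ᵥ logVec y) *
        min (y j) (y m) ^ α *
        (-(∑ i, K i j * Real.log (y i)) / y j + (∑ i, K i m * Real.log (y i)) / y m
          + η j / y j - η m / y m) ^ 2| ≤ C := by
  obtain ⟨c, hc, hcK⟩ := hK.exists_pos_mul_norm_sq_le
  set E := ∑ i, |η i|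
  set A := (∑ i, |K i j|) + ∑ i, |K i m|
  set a := |η j| + |η m|
  refine ⟨2 * Real.exp (a + (A + (E + 2)) ^ 2 / (2 * c)), fun y hy hy₁ => ?_⟩
  set u := ‖logVec y‖
  have hdensity : Real.exp (-(1 / 2) * (logVec y ⬝ᵥ K.mulVec (logVec y)) + η ⬝ᵥ logVec y)
      ≤ Real.exp (E * u - c / 2 * u ^ 2) := by
    have hη := (abs_le.mp (abs_dotProduct_le_sum_abs_mul_norm η (logVec y))).2
    have hQ := hcK (logVec y)
    gcongr
    linarith
  have hmin₀ : 0 ≤ min (y j) (y m) := le_min (hy j).le (hy m).le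
  have hweight : min (y j) (y m) ^ α ≤ 1 :=
    Real.rpow_le_one hmin₀ ((min_le_left _ _).trans (hy₁ j)) hα
  have hscore := abs_loglog_score_le K η j m hy
  have hT := sq_le_sq' (abs_le.mp hscore).1 (abs_le.mp hscore).2
  rw [abs_of_nonneg (by have := Real.rpow_nonneg hmin₀ α; positivity)]
  calc _ ≤ Real.exp (E * u - c / 2 * u ^ 2) * 1 * ((a + A * u) * Real.exp u) ^ 2 := by
        gcongr
    _ = (a + A * u) ^ 2 * Real.exp ((E + 2) * u - c / 2 * u ^ 2) := by
        rw [mul_one, mul_pow, sq (Real.exp u), ← Real.exp_add, mul_left_comm, ← Real.exp_add]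
        ring_nf
    _ ≤ _ := sq_mul_exp_sub_le hc (by positivity)

section simplexInt

variable {n : ℕ} {x : Fin n → ℝ}

theorem measurableSet_simplexInt (n : ℕ) : MeasurableSet (simplexInt n) := by
  simp only [simplexInt, Set.ofPred_and, Set.ofPred_forall]
  measurability

theorem le_one_of_mem_simplexInt (hx : x ∈ simplexInt n) (i : Fin n) : x i ≤ 1 :=
  (single_le_sum (fun k _ => (hx.1 k).le) (mem_univ i)).trans hx.2.le

theorem isBounded_simplexInt (n : ℕ) : Bornology.IsBounded (simplexInt n) :=
  (Metric.isBounded_Icc (0 : Fin n → ℝ) 1).subset fun _ hx =>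
    ⟨fun i => (hx.1 i).le, le_one_of_mem_simplexInt hx⟩

theorem fullVec_pos (hx : x ∈ simplexInt n) (i : Fin (n + 1)) : 0 < fullVec x i := by
  induction i using Fin.lastCases with
  | last => simpa [fullVec] using hx.2
  | cast k => simpa [fullVec] using hx.1 k

theorem fullVec_le_one (hx : x ∈ simplexInt n) (i : Fin (n + 1)) : fullVec x i ≤ 1 := by
  induction i using Fin.lastCases with
  | last => simpa [fullVec] using sum_nonneg fun k _ => (hx.1 k).le
  | cast k => simpa [fullVec] using le_one_of_mem_simplexInt hx k

end simplexInt

@[fun_prop]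
theorem continuous_fullVec {n : ℕ} : Continuous (fullVec : (Fin n → ℝ) → Fin (n + 1) → ℝ) :=
  continuous_pi fun i => by
    induction i using Fin.lastCases with
    | last => simp only [fullVec, Fin.snoc_last]; fun_prop
    | cast k => simp only [fullVec, Fin.snoc_castSucc]; fun_prop

@[fun_prop]
theorem measurable_logVec {n : ℕ} : Measurable (logVec : (Fin n → ℝ) → Fin n → ℝ) :=
  measurable_pi_lambda _ fun i => Real.measurable_log.comp (measurable_pi_apply i)

theorem loglog_weighted_score_square_integrable_general (n : ℕ)
    (K : Matrix (Fin (n + 1)) (Fin (n + 1)) ℝ) (hKpd : K.PosDef)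
    (η : Fin (n + 1) → ℝ) (j : Fin n) (α : ℝ) (hα : 0 < α) :
    IntegrableOn (fun x : Fin n → ℝ =>
      Real.exp (-(1 / 2) * (logVec (fullVec x) ⬝ᵥ K.mulVec (logVec (fullVec x)))
        + η ⬝ᵥ logVec (fullVec x)) *
      min (fullVec x j.castSucc) (fullVec x (Fin.last n)) ^ α *
      (-(∑ i, K i j.castSucc * Real.log (fullVec x i)) / fullVec x j.castSucc
        + (∑ i, K i (Fin.last n) * Real.log (fullVec x i)) / fullVec x (Fin.last n)
        + η j.castSucc / fullVec x j.castSucc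
        - η (Fin.last n) / fullVec x (Fin.last n)) ^ 2) (simplexInt n) := by
  obtain ⟨C, hC⟩ := exists_abs_loglog_integrand_le K hKpd η j.castSucc (Fin.last n) hα.le
  refine IntegrableOn.of_bound (isBounded_simplexInt n).measure_lt_top
    (Measurable.aestronglyMeasurable ?_) C ?_
  · simp only [dotProduct, mulVec]
    fun_prop
  · filter_upwards [ae_restrict_mem (measurableSet_simplexInt n)] with x hx
    exact hC _ (fullVec_pos hx) (fullVec_le_one hx)

/-- Weighted integrability of the squared log–log profiled score against the log–log
kernel, for symmetric positive definite `K` and weight exponent `α > 0`. -/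
theorem loglog_weighted_score_square_integrable (n : ℕ) (hn : 1 ≤ n)
    (K : Matrix (Fin (n + 1)) (Fin (n + 1)) ℝ) (hK : K.IsSymm) (hKpd : K.PosDef)
    (η : Fin (n + 1) → ℝ) (j : Fin n) (α : ℝ) (hα : 0 < α) :
    IntegrableOn (fun x : Fin n → ℝ =>
      Real.exp (-(1 / 2) * (logVec (fullVec x) ⬝ᵥ K.mulVec (logVec (fullVec x)))
        + η ⬝ᵥ logVec (fullVec x)) *
      min (fullVec x j.castSucc) (fullVec x (Fin.last n)) ^ α *
      (-(∑ i, K i j.castSucc * Real.log (fullVec x i)) / fullVec x j.castSucc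
        + (∑ i, K i (Fin.last n) * Real.log (fullVec x i)) / fullVec x (Fin.last n)
        + η j.castSucc / fullVec x j.castSucc
        - η (Fin.last n) / fullVec x (Fin.last n)) ^ 2) (simplexInt n) :=
  loglog_weighted_score_square_integrable_general n K hKpd η j α hα
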